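/- arXiv:1407.4425 — 2 statements merged into one kernel-verified Lean document; each statement's English description precedes it below -/
import Mathlib

section
/- Let H be a λ-accessible endofunctor of a locally λ-presentable category with λ uncountable. Then λ-filtered colimits of corecursive algebras, computed in Alg H (equivalently on the level of A), are again corecursive. -/
open CategoryTheory CategoryTheory.Limits CategoryTheory.Endofunctor

universe v u

/-- A category `J` is `κ`-filtered if every diagram with fewer than `κ` morphisms admits
a cocone. -/
def IsCardFiltered (J : Type v) [SmallCategory J] (κ : Cardinal.{v}) : Prop :=
  ∀ (K : Type v) [SmallCategory K], Cardinal.mk (Σ a b : K, a ⟶ b) < κ →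
    ∀ F : K ⥤ J, Nonempty (Limits.Cocone F)

variable {A : Type u} [Category.{v} A]

/-- A functor is `κ`-accessible if it preserves colimits of all `κ`-filtered shapes. -/
def PreservesCardFilteredColimits {B : Type*} [Category.{v} B] (F : A ⥤ B)
    (κ : Cardinal.{v}) : Prop :=
  ∀ (J : Type v) [SmallCategory J], IsCardFiltered J κ →
    Nonempty (PreservesColimitsOfShape J F)

/-- An object is `κ`-presentable if its hom-functor preserves `κ`-filtered colimits. -/
def IsCardPresentable (X : A) (κ : Cardinal.{v}) : Prop :=
  PreservesCardFilteredColimits (coyoneda.obj (Opposite.op X)) κ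

/-- `A` is locally `κ`-presentable: it is cocomplete and has a set of `κ`-presentable
objects such that every object is a `κ`-filtered colimit of objects from that set. -/
def LocallyCardPresentable (A : Type u) [Category.{v} A] (κ : Cardinal.{v}) : Prop :=
  HasColimits A ∧ ∃ S : Set A, (∀ X ∈ S, IsCardPresentable X κ) ∧
    ∀ X : A, ∃ (J : Type v) (_ : SmallCategory J), IsCardFiltered J κ ∧
      ∃ D : J ⥤ A, (∀ j, D.obj j ∈ S) ∧
        ∃ c : Limits.Cocone D, Nonempty (IsColimit c) ∧ Nonempty (c.pt ≅ X)

/-- An algebra structure is corecursive if every coalgebra has a unique solution in it. -/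
def IsCorecursive {H : A ⥤ A} (alg : Endofunctor.Algebra H) : Prop :=
  ∀ (X : A) (e : X ⟶ H.obj X), ∃! s : X ⟶ alg.a, s = e ≫ H.map s ≫ alg.str


/-!
Existence is inherited from any single stage: a solution into `D j`, followed by the colimit
injection, is a solution into the colimit algebra. For uniqueness, write the carrier of the
coalgebra `e` as a `κ`-filtered colimit of `κ`-presentable objects. Starting from one of them,
`e` unfolds (since `H` preserves that colimit) into a chain `Xₙ ⟶ H Xₙ₊₁` of presentable objects,
i.e. a coalgebra on `∐ Xₙ`, and every solution of `e` into the colimit algebra restricts to a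
solution of this chain. As `κ` is uncountable, the countably many components of such a solution and
the countably many equations between them are all realised at a single stage `D j`, where
corecursiveness makes the solution unique. So two solutions agree on every presentable piece of
the carrier, hence everywhere.
-/

namespace IsCardFiltered

variable {J : Type v} [SmallCategory J] {κ : Cardinal.{v}}

lemma exists_cocone_of_countable (hJ : IsCardFiltered J κ) (hκ : Cardinal.aleph0 < κ)
    {K : Type v} [SmallCategory K] [Countable (Σ a b : K, a ⟶ b)] (F : K ⥤ J) :
    Nonempty (Cocone F) :=
  hJ K (Cardinal.mk_le_aleph0.trans_lt hκ) F

lemma isFiltered (hJ : IsCardFiltered J κ) (hκ : Cardinal.aleph0 < κ) : IsFiltered J :=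
  IsFiltered.of_cocone_nonempty.{v} J fun F => hJ.exists_cocone_of_countable hκ F

lemma exists_upper_bound (hJ : IsCardFiltered J κ) (hκ : Cardinal.aleph0 < κ)
    {ι : Type v} [Countable ι] (k : ι → J) : ∃ m : J, ∀ i, Nonempty (k i ⟶ m) := by
  have : ∀ a b : Discrete ι, Countable (a ⟶ b) := fun _ _ => Subsingleton.to_countable
  obtain ⟨s⟩ := hJ.exists_cocone_of_countable hκ (Discrete.functor k)
  exact ⟨s.pt, fun i => ⟨s.ι.app ⟨i⟩⟩⟩

lemma exists_wide_cocone (hJ : IsCardFiltered J κ) (hκ : Cardinal.aleph0 < κ)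
    {ι : Type v} [Countable ι] {j : J} {k : ι → J} (w : ∀ i, j ⟶ k i) :
    ∃ (m : J) (v : j ⟶ m) (vk : ∀ i, k i ⟶ m), ∀ i, w i ≫ vk i = v := by
  have : Countable (WidePushoutShape ι) := inferInstanceAs (Countable (Option ι))
  have : ∀ a b : WidePushoutShape ι, Countable (a ⟶ b) := fun _ _ => Subsingleton.to_countable
  obtain ⟨s⟩ := hJ.exists_cocone_of_countable hκ (WidePushoutShape.wideSpan j k w)
  exact ⟨s.pt, s.ι.app none, fun i => s.ι.app (some i),
    fun i => s.w (WidePushoutShape.Hom.init i)⟩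

end IsCardFiltered

namespace IsCardPresentable

variable {J : Type v} [SmallCategory J] {κ : Cardinal.{v}} {F : J ⥤ A} {t : Cocone F}

lemma exists_factorization {X : A} (hX : IsCardPresentable X κ) (hJ : IsCardFiltered J κ)
    (ht : IsColimit t) (g : X ⟶ t.pt) : ∃ (j : J) (σ : X ⟶ F.obj j), σ ≫ t.ι.app j = g := by
  obtain ⟨_⟩ := hX J hJ
  exact Types.jointly_surjective _ (isColimitOfPreserves (coyoneda.obj (.op X)) ht) g

lemma exists_map_eq [IsFiltered J] {X : A} (hX : IsCardPresentable X κ)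
    (hJ : IsCardFiltered J κ) (ht : IsColimit t) {j : J} {x y : X ⟶ F.obj j}
    (h : x ≫ t.ι.app j = y ≫ t.ι.app j) : ∃ (k : J) (w : j ⟶ k), x ≫ F.map w = y ≫ F.map w := by
  obtain ⟨_⟩ := hX J hJ
  exact (Types.FilteredColimit.isColimit_eq_iff'
    (isColimitOfPreserves (coyoneda.obj (.op X)) ht) x y).1 h

variable {ι : Type v} [Countable ι] {X : ι → A}

lemma exists_factorization_of_countable (hX : ∀ i, IsCardPresentable (X i) κ)
    (hJ : IsCardFiltered J κ) (hκ : Cardinal.aleph0 < κ) (ht : IsColimit t)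
    (g : ∀ i, X i ⟶ t.pt) : ∃ (j : J) (σ : ∀ i, X i ⟶ F.obj j), ∀ i, σ i ≫ t.ι.app j = g i := by
  choose k σ hσ using fun i => (hX i).exists_factorization hJ ht (g i)
  obtain ⟨m, hm⟩ := hJ.exists_upper_bound hκ k
  exact ⟨m, fun i => σ i ≫ F.map (hm i).some, fun i => by simp [hσ]⟩

lemma exists_map_eq_of_countable (hX : ∀ i, IsCardPresentable (X i) κ)
    (hJ : IsCardFiltered J κ) (hκ : Cardinal.aleph0 < κ) (ht : IsColimit t) {j : J}
    {x y : ∀ i, X i ⟶ F.obj j} (h : ∀ i, x i ≫ t.ι.app j = y i ≫ t.ι.app j) :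
    ∃ (m : J) (v : j ⟶ m), ∀ i, x i ≫ F.map v = y i ≫ F.map v := by
  have := hJ.isFiltered hκ
  choose k w hw using fun i => (hX i).exists_map_eq hJ ht (h i)
  obtain ⟨m, v, vk, hv⟩ := hJ.exists_wide_cocone hκ w
  refine ⟨m, v, fun i => ?_⟩
  rw [← hv i, F.map_comp, reassoc_of% (hw i)]

end IsCardPresentable

namespace CategoryTheory.Endofunctor.Algebra

variable {H : A ⥤ A} {J : Type*} [Category J] (D : J ⥤ Algebra H)

def strNatTrans : (D ⋙ forget H) ⋙ H ⟶ D ⋙ forget H where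
  app j := (D.obj j).str
  naturality _ _ f := (D.map f).h

variable {D} {t : Cocone (D ⋙ forget H)}

def liftCocone (ht : IsColimit (H.mapCocone t)) : Cocone D where
  pt := ⟨t.pt, ht.desc ((Cocone.precompose (strNatTrans D)).obj t)⟩
  ι :=
    { app j := ⟨t.ι.app j, ht.fac _ j⟩
      naturality _ _ f := by ext; exact (t.w f).trans (Category.comp_id _).symm }

def isColimitLiftCocone (ht₀ : IsColimit t) (ht : IsColimit (H.mapCocone t)) :
    IsColimit (liftCocone ht) :=
  IsColimit.ofFaithful (forget H) (t := liftCocone ht) ht₀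
    (fun s =>
      let d : t.pt ⟶ s.pt.a := ht₀.desc ((forget H).mapCocone s)
      ⟨d, ht.hom_ext fun j => by
        have hd : t.ι.app j ≫ d = (s.ι.app j).f := ht₀.fac _ j
        erw [← H.map_comp_assoc, hd, (s.ι.app j).h, reassoc_of% (ht.fac _ j)]
        exact ((D.obj j).str ≫= hd).symm.trans (Category.assoc _ _ _).symm⟩)
    fun _ => rfl

instance [HasColimit (D ⋙ forget H)] [PreservesColimit (D ⋙ forget H) H] :
    PreservesColimit D (forget H) :=
  let ht := isColimitOfPreserves H (colimit.isColimit (D ⋙ forget H))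
  preservesColimit_of_preserves_colimit_cocone (isColimitLiftCocone (colimit.isColimit _) ht)
    (colimit.isColimit _)

end CategoryTheory.Endofunctor.Algebra

section Solutions

variable {H : A ⥤ A}

def IsSolution {Y : A} (e : Y ⟶ H.obj Y) (B : Algebra H) (s : Y ⟶ B.a) : Prop :=
  s = e ≫ H.map s ≫ B.str

lemma IsSolution.comp {Y : A} {e : Y ⟶ H.obj Y} {B B' : Algebra H} {s : Y ⟶ B.a}
    (hs : IsSolution e B s) (f : B ⟶ B') : IsSolution e B' (s ≫ f.f) := by
  unfold IsSolution
  conv_lhs => rw [hs]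
  simp

variable {X : ℕ → A} (E : ∀ n, X n ⟶ H.obj (X (n + 1)))

def IsChainSolution (B : Algebra H) (σ : ∀ n, X n ⟶ B.a) : Prop :=
  ∀ n, σ n = E n ≫ H.map (σ (n + 1)) ≫ B.str

noncomputable def chainCoalgebra [HasCountableCoproducts A] : ∐ X ⟶ H.obj (∐ X) :=
  Sigma.desc fun n => E n ≫ H.map (Sigma.ι X (n + 1))

variable {E} {B B' : Algebra H} {σ : ∀ n, X n ⟶ B.a}

lemma isChainSolution_comp_of_eq (f : B ⟶ B')
    (h : ∀ n, σ n ≫ f.f = (E n ≫ H.map (σ (n + 1)) ≫ B.str) ≫ f.f) :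
    IsChainSolution E B' fun n => σ n ≫ f.f := fun n => by
  simp [h n]

lemma IsChainSolution.comp (hσ : IsChainSolution E B σ) (f : B ⟶ B') :
    IsChainSolution E B' fun n => σ n ≫ f.f :=
  isChainSolution_comp_of_eq f fun n => by rw [← hσ n]

lemma IsChainSolution.isSolution_desc [HasCountableCoproducts A] (hσ : IsChainSolution E B σ) :
    IsSolution (chainCoalgebra E) B (Sigma.desc σ) :=
  Sigma.hom_ext _ _ fun n => by simpa [chainCoalgebra, ← H.map_comp_assoc] using hσ n

lemma IsCorecursive.eq_of_isChainSolution [HasCountableCoproducts A] (hB : IsCorecursive B)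
    {τ : ∀ n, X n ⟶ B.a} (hσ : IsChainSolution E B σ) (hτ : IsChainSolution E B τ) : σ = τ := by
  obtain ⟨_, -, huniq⟩ := hB _ (chainCoalgebra E)
  have hdesc := (huniq _ hσ.isSolution_desc).trans (huniq _ hτ.isSolution_desc).symm
  funext n
  simpa using Sigma.ι X n ≫= hdesc

lemma IsSolution.isChainSolution {Y : A} {e : Y ⟶ H.obj Y} {s : Y ⟶ B.a}
    (hs : IsSolution e B s) {g : ∀ n, X n ⟶ Y} (hg : ∀ n, E n ≫ H.map (g (n + 1)) = g n ≫ e) :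
    IsChainSolution E B fun n => g n ≫ s := fun n => by
  beta_reduce
  conv_lhs => rw [hs, ← reassoc_of% (hg n)]
  simp

end Solutions

section Colimit

variable {H : A ⥤ A} {κ : Cardinal.{v}} {J : Type v} [SmallCategory J] {D : J ⥤ Algebra H}
  {c : Cocone D} {X : ℕ → A} {E : ∀ n, X n ⟶ H.obj (X (n + 1))}

lemma IsChainSolution.exists_lift (hκ : Cardinal.aleph0 < κ) (hJ : IsCardFiltered J κ)
    (hc : IsColimit ((Algebra.forget H).mapCocone c)) (hX : ∀ n, IsCardPresentable (X n) κ)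
    {σ : ∀ n, X n ⟶ c.pt.a} (hσ : IsChainSolution E c.pt σ) :
    ∃ (j : J) (τ : ∀ n, X n ⟶ (D.obj j).a),
      IsChainSolution E (D.obj j) τ ∧ ∀ n, τ n ≫ (c.ι.app j).f = σ n := by
  obtain ⟨j, τ, hτ⟩ := IsCardPresentable.exists_factorization_of_countable
    (X := fun i : ULift.{v} ℕ => X i.down) (fun _ => hX _) hJ hκ hc fun i => σ i.down
  let τ' (n : ℕ) : X n ⟶ (D.obj j).a := τ ⟨n⟩
  have hτ' (n : ℕ) : τ' n ≫ (c.ι.app j).f = σ n := hτ ⟨n⟩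
  -- `τ'` solves the chain only after the colimit injection; a later stage equalizes the defect.
  obtain ⟨m, v, hv⟩ := IsCardPresentable.exists_map_eq_of_countable
    (X := fun i : ULift.{v} ℕ => X i.down) (fun _ => hX _) hJ hκ hc
    (x := fun i => τ' i.down) (y := fun i => E i.down ≫ H.map (τ' (i.down + 1)) ≫ (D.obj j).str)
    fun ⟨n⟩ => by
      change τ' n ≫ (c.ι.app j).f = (E n ≫ H.map (τ' (n + 1)) ≫ (D.obj j).str) ≫ (c.ι.app j).f
      rw [hτ', Category.assoc, Category.assoc, ← Algebra.Hom.h, ← H.map_comp_assoc, hτ']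
      exact hσ n
  refine ⟨m, fun n => τ' n ≫ (D.map v).f, isChainSolution_comp_of_eq _ fun n => hv ⟨n⟩, fun n => ?_⟩
  rw [Category.assoc, ← Algebra.comp_f, c.w, hτ']

lemma IsChainSolution.eq_of_isColimit [HasCountableCoproducts A] (hκ : Cardinal.aleph0 < κ)
    (hJ : IsCardFiltered J κ) (hD : ∀ j, IsCorecursive (D.obj j))
    (hc : IsColimit ((Algebra.forget H).mapCocone c)) (hX : ∀ n, IsCardPresentable (X n) κ)
    {σ σ' : ∀ n, X n ⟶ c.pt.a} (hσ : IsChainSolution E c.pt σ)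
    (hσ' : IsChainSolution E c.pt σ') : σ = σ' := by
  have := hJ.isFiltered hκ
  obtain ⟨j, τ, hτ, hτσ⟩ := hσ.exists_lift hκ hJ hc hX
  obtain ⟨j', τ', hτ', hτσ'⟩ := hσ'.exists_lift hκ hJ hc hX
  have hττ' := (hD _).eq_of_isChainSolution (hτ.comp (D.map (IsFiltered.leftToMax j j')))
    (hτ'.comp (D.map (IsFiltered.rightToMax j j')))
  funext n
  rw [← hτσ, ← hτσ', ← c.w (IsFiltered.leftToMax j j'), ← c.w (IsFiltered.rightToMax j j')]
  simpa only [Algebra.comp_f, Category.assoc] using congrFun hττ' n =≫ (c.ι.app _).f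

end Colimit

lemma exists_chain_of_isColimit {H : A ⥤ A} {κ : Cardinal.{v}} {P : Type v} [SmallCategory P]
    {G : P ⥤ A} {t : Cocone G} (hP : IsCardFiltered P κ)
    (hG : ∀ p, IsCardPresentable (G.obj p) κ) (ht : IsColimit (H.mapCocone t))
    (e : t.pt ⟶ H.obj t.pt) (p : P) :
    ∃ (q : ℕ → P) (E : ∀ n, G.obj (q n) ⟶ H.obj (G.obj (q (n + 1)))),
      q 0 = p ∧ ∀ n, E n ≫ H.map (t.ι.app (q (n + 1))) = t.ι.app (q n) ≫ e := by
  choose next y hy using fun p => (hG p).exists_factorization hP ht (t.ι.app p ≫ e)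
  let q (n : ℕ) : P := Nat.rec p (fun _ => next) n
  exact ⟨q, fun n => y (q n), rfl, fun n => hy (q n)⟩

/-- For a `λ`-accessible endofunctor on a locally `λ`-presentable category with `λ`
uncountable, `λ`-filtered colimits of corecursive algebras in `Alg H` are corecursive. -/
theorem filtered_colimit_of_corecursive_isCorecursive
    (H : A ⥤ A) (κ : Cardinal.{v}) (hκ : Cardinal.aleph0 < κ)
    (hA : LocallyCardPresentable A κ) (hH : PreservesCardFilteredColimits H κ)
    (J : Type v) [SmallCategory J] (hJ : IsCardFiltered J κ)
    (D : J ⥤ Endofunctor.Algebra H) (hD : ∀ j, IsCorecursive (D.obj j))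
    (c : Limits.Cocone D) (hc : IsColimit c) : IsCorecursive c.pt := by
  obtain ⟨_, S, hS, hpres⟩ := hA
  have := hJ.isFiltered hκ
  obtain ⟨_⟩ := hH J hJ
  have hc' := isColimitOfPreserves (Algebra.forget H) hc
  intro X e
  obtain ⟨j₀⟩ := IsFiltered.nonempty (C := J)
  obtain ⟨s₀, hs₀, -⟩ := hD j₀ X e
  have hs₀' : IsSolution e c.pt (s₀ ≫ (c.ι.app j₀).f) := IsSolution.comp hs₀ _
  refine ⟨_, hs₀', fun s (hs : IsSolution e c.pt s) => ?_⟩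
  obtain ⟨P, _, hP, G, hGS, t, ⟨ht⟩, ⟨φ⟩⟩ := hpres X
  obtain ⟨_⟩ := hH P hP
  have hG : ∀ p, IsCardPresentable (G.obj p) κ := fun p => hS _ (hGS p)
  let t' := t.extend φ.hom
  have ht' : IsColimit t' := IsColimit.extendIso φ.hom ht
  refine ht'.hom_ext fun p => ?_
  obtain ⟨q, E, rfl, hE⟩ := exists_chain_of_isColimit hP hG (isColimitOfPreserves H ht') e p
  have hchain := IsChainSolution.eq_of_isColimit hκ hJ hD hc' (fun n => hG (q n))
    (hs.isChainSolution (g := fun n => t'.ι.app (q n)) hE)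
    (hs₀'.isChainSolution (g := fun n => t'.ι.app (q n)) hE)
  exact congrFun hchain 0
end

section
/- Let A be a complete category, and let H have a free Bloom algebra on an object Y such that A(Y, HY) is nonempty. Then the free Bloom algebra on Y is weakly initial in the category of Bloom algebras, and consequently H has a terminal coalgebra. -/
/-!
A morphism `y : Y ⟶ H Y` makes `Y` a coalgebra, and its solution in any Bloom algebra `B` is a
morphism `Y ⟶ B`; by freeness it extends to a Bloom homomorphism out of the free algebra, which is
therefore weakly initial. Bloom algebras have all limits, computed in `A`, so Freyd's
wide-equalizer construction turns the weakly initial object into an initial Bloom algebra `I`.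
Initiality gives a homomorphism `t : I ⟶ H I`, and the coalgebra `(I, t)` is terminal: the
solutions `sol X` are coalgebra maps into it, and `sol (I, t)` is a Bloom endomorphism of `I`,
hence the identity, which by functoriality of solutions forces every coalgebra map into `(I, t)`
to be a solution.
-/

open CategoryTheory CategoryTheory.Limits CategoryTheory.Endofunctor

universe v u

variable {A : Type u} [Category.{v} A]

/-- A Bloom algebra: an `H`-algebra together with a functorial solution operation. -/
structure BloomAlg (H : A ⥤ A) where
  a : A
  str : H.obj a ⟶ a
  sol : ∀ X : Endofunctor.Coalgebra H, X.V ⟶ a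
  isSol : ∀ X : Endofunctor.Coalgebra H, sol X = X.str ≫ H.map (sol X) ≫ str
  functorial : ∀ (X Y : Endofunctor.Coalgebra H) (h : X ⟶ Y), h.f ≫ sol Y = sol X

/-- A homomorphism of Bloom algebras: a solution-preserving algebra homomorphism. -/
@[ext]
structure BloomHom {H : A ⥤ A} (B C : BloomAlg H) where
  f : B.a ⟶ C.a
  hom : B.str ≫ f = H.map f ≫ C.str
  pres : ∀ X : Endofunctor.Coalgebra H, B.sol X ≫ f = C.sol X

instance {H : A ⥤ A} : Category (BloomAlg H) where
  Hom := BloomHom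
  id B := ⟨𝟙 _, by simp, fun X => by simp⟩
  comp {B C D} f g := ⟨f.f ≫ g.f,
    by rw [← Category.assoc, f.hom, Category.assoc, g.hom, H.map_comp, Category.assoc],
    fun X => by rw [← Category.assoc, f.pres, g.pres]⟩
  id_comp f := by apply BloomHom.ext; simp
  comp_id f := by apply BloomHom.ext; simp
  assoc f g h := by apply BloomHom.ext; simp

universe w

namespace BloomAlg

variable {H : A ⥤ A}

@[ext]
lemma hom_ext {B C : BloomAlg H} {u v : B ⟶ C} (h : u.f = v.f) : u = v :=
  BloomHom.ext h

@[simp]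
lemma comp_f {B C D : BloomAlg H} (u : B ⟶ C) (v : C ⟶ D) : (u ≫ v).f = u.f ≫ v.f := rfl

-- Reducible, so that `(F ⋙ forget H).obj j` and `(F.obj j).a` are identified when `simp` matches.
variable (H) in
abbrev forget : BloomAlg H ⥤ A where
  obj B := B.a
  map u := u.f

section Limits

variable {J : Type*} [Category.{w} J] (F : J ⥤ BloomAlg H) [HasLimit (F ⋙ forget H)]

@[simp]
lemma limit_π_comp_map_f {j k : J} (u : j ⟶ k) :
    limit.π (F ⋙ forget H) j ≫ (F.map u).f = limit.π (F ⋙ forget H) k :=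
  limit.w (F ⋙ forget H) u

noncomputable def limitStr : H.obj (limit (F ⋙ forget H)) ⟶ limit (F ⋙ forget H) :=
  limit.lift (F ⋙ forget H)
    { pt := _
      π :=
        { app j := H.map (limit.π (F ⋙ forget H) j) ≫ (F.obj j).str
          naturality j k u := by simp [(F.map u).hom, ← H.map_comp_assoc] } }

@[simp]
lemma limitStr_π (j : J) :
    limitStr F ≫ limit.π (F ⋙ forget H) j = H.map (limit.π (F ⋙ forget H) j) ≫ (F.obj j).str :=
  limit.lift_π _ _

noncomputable def limitSol (X : Coalgebra H) : X.V ⟶ limit (F ⋙ forget H) :=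
  limit.lift (F ⋙ forget H)
    { pt := X.V
      π :=
        { app j := (F.obj j).sol X
          naturality j k u := by simp [(F.map u).pres] } }

@[simp]
lemma limitSol_π (X : Coalgebra H) (j : J) :
    limitSol F X ≫ limit.π (F ⋙ forget H) j = (F.obj j).sol X :=
  limit.lift_π _ _

noncomputable def limitObj : BloomAlg H where
  a := limit (F ⋙ forget H)
  str := limitStr F
  sol := limitSol F
  isSol X := limit.hom_ext fun j => by
    simp [← H.map_comp_assoc, ← (F.obj j).isSol X]
  functorial X Y h := limit.hom_ext fun j => by simp [(F.obj j).functorial X Y h]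

noncomputable def limitCone : Cone F where
  pt := limitObj F
  π :=
    { app j := ⟨limit.π (F ⋙ forget H) j, limitStr_π F j, fun X => limitSol_π F X j⟩
      naturality j k u := by ext; simp [limitObj] }

noncomputable def limitConeIsLimit : IsLimit (limitCone F) where
  lift s :=
    { f := limit.lift (F ⋙ forget H) ((forget H).mapCone s)
      hom := limit.hom_ext fun j => by
        dsimp only [limitCone, limitObj]
        simpa [← H.map_comp_assoc] using (s.π.app j).hom
      pres X := limit.hom_ext fun j => by
        dsimp only [limitCone, limitObj]
        simpa using (s.π.app j).pres X }
  fac s j := by ext; exact limit.lift_π _ _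
  uniq s m hm := by
    ext
    refine limit.hom_ext fun j => ?_
    rw [limit.lift_π]
    exact congrArg BloomHom.f (hm j)

instance [HasLimitsOfShape J A] : HasLimitsOfShape J (BloomAlg H) where
  has_limit F := ⟨⟨⟨limitCone F, limitConeIsLimit F⟩⟩⟩

end Limits

abbrev applyH (B : BloomAlg H) : BloomAlg H where
  a := H.obj B.a
  str := H.map B.str
  sol X := X.str ≫ H.map (B.sol X)
  isSol X := by
    rw [← H.map_comp, Category.assoc, ← B.isSol X]
  functorial X Y h := by
    rw [← h.h_assoc, ← H.map_comp, B.functorial X Y h]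

section Coalgebra

variable {B : BloomAlg H} (t : B ⟶ B.applyH)

abbrev toCoalgebra : Coalgebra H := ⟨B.a, t.f⟩

def solHom (X : Coalgebra H) : X ⟶ toCoalgebra t := ⟨B.sol X, (t.pres X).symm⟩

lemma str_comp_sol_toCoalgebra :
    B.str ≫ B.sol (toCoalgebra t) = H.map (B.sol (toCoalgebra t)) ≫ B.str := by
  let HT : Coalgebra H := ⟨H.obj B.a, H.map t.f⟩
  have hT : t.f ≫ B.sol HT = B.sol (toCoalgebra t) :=
    B.functorial (toCoalgebra t) HT ⟨t.f, rfl⟩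
  have hHT : B.str ≫ B.sol (toCoalgebra t) = B.sol HT :=
    B.functorial HT (toCoalgebra t) ⟨B.str, t.hom.symm⟩
  rw [hHT, B.isSol HT, ← hT, H.map_comp_assoc]

def solEnd : B ⟶ B :=
  ⟨B.sol (toCoalgebra t), str_comp_sol_toCoalgebra t,
    fun X => B.functorial X (toCoalgebra t) (solHom t X)⟩

def isTerminalToCoalgebra (ht : solEnd t = 𝟙 B) : IsTerminal (toCoalgebra t) :=
  IsTerminal.ofUniqueHom (solHom t) fun X m => by
    ext
    have hsol : B.sol (toCoalgebra t) = 𝟙 B.a := congrArg BloomHom.f ht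
    simpa [hsol, solHom] using B.functorial X (toCoalgebra t) m

end Coalgebra

theorem exists_isTerminal_coalgebra_of_hasInitial [HasInitial (BloomAlg H)] :
    ∃ T : Coalgebra H, Nonempty (IsTerminal T) :=
  ⟨_, ⟨isTerminalToCoalgebra (initialIsInitial.to _) (initialIsInitial.hom_ext _ _)⟩⟩

end BloomAlg

/-- In a complete category, if `H` has a free Bloom algebra on an object `Y` with
`A(Y, HY)` nonempty, then the free Bloom algebra is weakly initial among Bloom algebras
and `H` has a terminal coalgebra. -/
theorem free_bloom_weakly_initial_and_terminal_coalgebra [HasLimits A]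
    (H : A ⥤ A) (Y : A) (hY : Nonempty (Y ⟶ H.obj Y))
    (Afree : BloomAlg H) (η : Y ⟶ Afree.a)
    (huniv : ∀ (B : BloomAlg H) (g : Y ⟶ B.a),
      ∃! h : Afree ⟶ B, η ≫ h.f = g) :
    (∀ B : BloomAlg H, Nonempty (Afree ⟶ B)) ∧
      ∃ T : Endofunctor.Coalgebra H, Nonempty (IsTerminal T) := by
  obtain ⟨y⟩ := hY
  have weak (B : BloomAlg H) : Nonempty (Afree ⟶ B) :=
    ⟨(huniv B (B.sol ⟨Y, y⟩)).exists.choose⟩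
  have : HasInitial (BloomAlg H) := hasInitial_of_weakly_initial_and_hasWideEqualizers weak
  exact ⟨weak, BloomAlg.exists_isTerminal_coalgebra_of_hasInitial⟩
end
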